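/- The Werner–Holevo channel is self-complementary: for every 3×3 complex matrix ρ, the 3×3 matrix with entries C(ρ)_{ab} = Tr(K_a ρ K_b†), a,b ∈ {1,2,3}, where K_a = (1/√2)·J_a, equals Λ₁(ρ) = (1/2)(Tr(ρ)·I₃ − ρᵀ). -/

import Mathlib

open Matrix

/-- The spin-1 matrix `J₁ = -i[[0,0,0],[0,0,1],[0,-1,0]]`. -/
noncomputable def J1 : Matrix (Fin 3) (Fin 3) ℂ :=
  (-Complex.I) • !![0, 0, 0; 0, 0, 1; 0, -1, 0]

/-- The spin-1 matrix `J₂ = -i[[0,0,-1],[0,0,0],[1,0,0]]`. -/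
noncomputable def J2 : Matrix (Fin 3) (Fin 3) ℂ :=
  (-Complex.I) • !![0, 0, -1; 0, 0, 0; 1, 0, 0]

/-- The spin-1 matrix `J₃ = -i[[0,1,0],[-1,0,0],[0,0,0]]`. -/
noncomputable def J3 : Matrix (Fin 3) (Fin 3) ℂ :=
  (-Complex.I) • !![0, 1, 0; -1, 0, 0; 0, 0, 0]

/-- The Kraus operators `K_a = (1/√2)·J_a` of the Werner–Holevo channel. -/
noncomputable def K : Fin 3 → Matrix (Fin 3) (Fin 3) ℂ :=
  ![((1 / Real.sqrt 2 : ℝ) : ℂ) • J1,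
    ((1 / Real.sqrt 2 : ℝ) : ℂ) • J2,
    ((1 / Real.sqrt 2 : ℝ) : ℂ) • J3]

/-! Up to the scalar `i/√2`, the Kraus operator `K_a` is the cross-product matrix `[e_a]ₓ` of the
`a`-th basis vector, which is real. Hence `C(ρ)_{ab} = ½ Tr([e_a]ₓ ρ [e_b]ₓᵀ)`, and the identity
`[u]ₓᵀ [v]ₓ = (u ⬝ v) I - v uᵀ`, a form of the scalar quadruple product identity, turns this into
`½ (δ_{ab} Tr ρ - ρ_{ba})`. -/

def crossMatrix {R : Type*} [CommRing R] (v : Fin 3 → R) : Matrix (Fin 3) (Fin 3) R :=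
  !![0, -v 2, v 1; v 2, 0, -v 0; -v 1, v 0, 0]

section crossMatrix

variable {R : Type*} [CommRing R]

theorem crossMatrix_mulVec (v w : Fin 3 → R) : crossMatrix v *ᵥ w = v ⨯₃ w := by
  ext i
  fin_cases i <;> simp [crossMatrix, cross_apply, mulVec, vecHead, vecTail] <;> ring

theorem col_crossMatrix (v : Fin 3 → R) (j : Fin 3) :
    (crossMatrix v).col j = v ⨯₃ Pi.single j 1 := by
  rw [← mulVec_single_one, crossMatrix_mulVec]

theorem conjTranspose_crossMatrix [StarRing R] (v : Fin 3 → R) :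
    (crossMatrix v)ᴴ = (crossMatrix (star v))ᵀ := by
  ext i j
  fin_cases i <;> fin_cases j <;> simp [crossMatrix]

theorem transpose_crossMatrix_mul_crossMatrix (u v : Fin 3 → R) :
    (crossMatrix u)ᵀ * crossMatrix v = (u ⬝ᵥ v) • 1 - vecMulVec v u := by
  ext k l
  rw [mul_apply']
  change (crossMatrix u).col k ⬝ᵥ (crossMatrix v).col l = _
  rw [col_crossMatrix, col_crossMatrix, cross_dot_cross]
  simp [vecMulVec_apply, one_apply, Pi.single_apply, eq_comm, mul_comm]

theorem trace_crossMatrix_mul_mul_transpose (u v : Fin 3 → R) (ρ : Matrix (Fin 3) (Fin 3) R) :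
    trace (crossMatrix u * ρ * (crossMatrix v)ᵀ) = (v ⬝ᵥ u) * trace ρ - v ⬝ᵥ ρ *ᵥ u := by
  rw [trace_mul_comm, ← mul_assoc, transpose_crossMatrix_mul_crossMatrix, sub_mul, smul_mul,
    one_mul, trace_sub, trace_smul, vecMulVec_mul, trace_vecMulVec, smul_eq_mul, dotProduct_mulVec,
    dotProduct_comm u]

end crossMatrix

theorem K_eq_smul_crossMatrix (a : Fin 3) :
    K a = (Complex.I / Real.sqrt 2) • crossMatrix (Pi.single a 1) := by
  fin_cases a <;> ext i j <;> fin_cases i <;> fin_cases j <;>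
    simp [K, J1, J2, J3, crossMatrix, div_eq_inv_mul]

/-- The Werner–Holevo channel is self-complementary: the complementary channel
`C(ρ)_{ab} = Tr(K_a ρ K_b†)` equals `Λ₁(ρ) = (1/2)(Tr(ρ)·I₃ − ρᵀ)`. -/
theorem wernerHolevo_self_complementary (ρ : Matrix (Fin 3) (Fin 3) ℂ) :
    (Matrix.of fun a b : Fin 3 => (K a * ρ * (K b)ᴴ).trace) =
      (1 / 2 : ℂ) • (ρ.trace • (1 : Matrix (Fin 3) (Fin 3) ℂ) - ρᵀ) := by
  have hscalar : Complex.I / Real.sqrt 2 * star (Complex.I / Real.sqrt 2) = 1 / 2 := by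
    rw [Complex.star_def, Complex.mul_conj, Complex.normSq_div, Complex.normSq_I,
      Complex.normSq_ofReal, Real.mul_self_sqrt zero_le_two]
    norm_num
  ext a b
  rw [of_apply, K_eq_smul_crossMatrix, K_eq_smul_crossMatrix, conjTranspose_smul,
    conjTranspose_crossMatrix, ← Pi.single_star, star_one]
  simp only [Matrix.smul_mul, Matrix.mul_smul, trace_smul, smul_eq_mul,
    trace_crossMatrix_mul_mul_transpose]
  rw [← mul_assoc, mul_comm (star _), hscalar, single_dotProduct, single_dotProduct,
    mulVec_single_one]
  simp [Pi.single_apply, one_apply, eq_comm]
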